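/- arXiv:2010.07974 — 2 statements merged into one kernel-verified Lean document; each statement's English description precedes it below -/
import Mathlib

section
/- MUSIC noise-correlation function bound (Theorem thm:MUSICperformance). Let y = s + α ∈ ℂ^{M+1} be a data vector written as an ideal signal s plus a perturbation α, let 1 ≤ L < M, and set H = Hankel_L(y), H_s = Hankel_L(s) and E = Hankel_L(α), so H = H_s + E. Assume H_s has rank exactly n, with smallest nonzero singular value ε_min, that L ≥ n and M − L + 1 ≥ n, and that 2‖E‖ < ε_min, where ‖·‖ is the spectral norm. For a matrix K of the same shape with at least n nonzero singular values, let P_noise(K) be an orthogonal projection onto the orthogonal complement of the span of left singular vectors of K corresponding to its n largest singular values, and for z ∈ ℂ define R_K(z) = ‖P_noise(K)·v_L(z)‖₂ / ‖v_L(z)‖₂, where v_L(z) = (1, z, z², …, z^L)ᵀ. Then for every z ∈ ℂ, |R_H(z) − R_{H_s}(z)| ≤ 2‖E‖/ε_min. -/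
open scoped Matrix BigOperators

namespace RB

/-- The spectral norm (largest singular value) of a complex matrix. -/
noncomputable def specNorm {m n : Type} [Fintype m] [Fintype n] [DecidableEq m]
    (A : Matrix m n ℂ) : ℝ :=
  ⨆ i : m, Real.sqrt ((Matrix.isHermitian_mul_conjTranspose_self A).eigenvalues i)

/-- The `(L+1) × (M−L+1)` Hankel matrix of a vector `v ∈ ℂ^{M+1}`. -/
def hankelMat (M L : ℕ) (hLM : L ≤ M) (v : Fin (M + 1) → ℂ) :
    Matrix (Fin (L + 1)) (Fin (M - L + 1)) ℂ :=
  Matrix.of fun j k => v ⟨j.val + k.val, by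
    have hj := j.isLt; have hk := k.isLt; omega⟩

/-- A singular value decomposition `K = U · diag(σ) · Vᴴ` with `U, V` unitary and
`σ` a nonincreasing family of nonnegative singular values (padded with arbitrary
values beyond the minimum dimension). -/
def IsSVD {p q : ℕ} (K : Matrix (Fin p) (Fin q) ℂ) (U : Matrix (Fin p) (Fin p) ℂ)
    (σ : Fin p → ℝ) (V : Matrix (Fin q) (Fin q) ℂ) : Prop :=
  U ∈ Matrix.unitaryGroup (Fin p) ℂ ∧ V ∈ Matrix.unitaryGroup (Fin q) ℂ ∧
    Antitone σ ∧ (∀ i, 0 ≤ σ i) ∧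
    K = U * (Matrix.of fun (i : Fin p) (j : Fin q) => if (i : ℕ) = (j : ℕ) then (σ i : ℂ) else 0) * Vᴴ

/-- The orthogonal projection onto the orthogonal complement of the span of the first
`n` left singular vectors (the columns of `U`). -/
noncomputable def noiseProj {p : ℕ} (n : ℕ) (U : Matrix (Fin p) (Fin p) ℂ) :
    Matrix (Fin p) (Fin p) ℂ :=
  U * Matrix.diagonal (fun i : Fin p => if n ≤ (i : ℕ) then (1 : ℂ) else 0) * Uᴴ

/-- The Euclidean norm of a complex vector. -/
noncomputable def l2norm {p : ℕ} (v : Fin p → ℂ) : ℝ :=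
  Real.sqrt (∑ i, ‖v i‖ ^ 2)

/-- The MUSIC noise-space correlation function `R(z) = ‖P v_L(z)‖₂ / ‖v_L(z)‖₂`,
where `v_L(z) = (1, z, …, z^L)ᵀ`. -/
noncomputable def musicR {L : ℕ} (P : Matrix (Fin (L + 1)) (Fin (L + 1)) ℂ) (z : ℂ) : ℝ :=
  l2norm (P.mulVec fun i : Fin (L + 1) => z ^ (i : ℕ)) /
    l2norm (fun i : Fin (L + 1) => z ^ (i : ℕ))

end RB

/-!
By Weyl's inequality the singular values of `H = H_s + E` lie within `‖E‖` of those of `H_s`,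
so those of `H` with index `≥ n` are at most `‖E‖` and its first `n` are at least `ε_min - ‖E‖`. So the noise
projection `P` of `H` sends `H_s = H - E` to norm `≤ 2‖E‖`, and the noise projection `P_s` of `H_s`
sends `H = H_s + E` to norm `≤ ‖E‖`. A truncated pseudo-inverse writes the signal part `v - P_s v`
as `H_s w` with `‖w‖ ≤ ‖v‖ / ε_min`, whence `‖P v‖ ≤ ‖P_s v‖ + 2‖E‖/ε_min ‖v‖`; symmetrically
`‖P_s v‖ ≤ ‖P v‖ + ‖E‖/(ε_min - ‖E‖) ‖v‖`, and `‖E‖/(ε_min - ‖E‖) ≤ 2‖E‖/ε_min` as `2‖E‖ < ε_min`.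
-/

namespace RB

open Matrix

section L2Norm

variable {k l : ℕ}

lemma l2norm_eq_norm (v : Fin k → ℂ) : l2norm v = ‖WithLp.toLp 2 v‖ := by
  rw [EuclideanSpace.norm_eq]
  rfl

lemma l2norm_nonneg (v : Fin k → ℂ) : 0 ≤ l2norm v :=
  Real.sqrt_nonneg _

lemma l2norm_pos {v : Fin k → ℂ} (hv : v ≠ 0) : 0 < l2norm v := by
  rw [l2norm_eq_norm, norm_pos_iff]
  simpa using hv

lemma l2norm_add_le (u v : Fin k → ℂ) : l2norm (u + v) ≤ l2norm u + l2norm v := by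
  simpa only [l2norm_eq_norm, WithLp.toLp_add] using norm_add_le _ _

lemma l2norm_sub_le (u v : Fin k → ℂ) : l2norm (u - v) ≤ l2norm u + l2norm v := by
  simpa only [l2norm_eq_norm, WithLp.toLp_sub] using norm_sub_le _ _

lemma star_dotProduct_self (v : Fin k → ℂ) : star v ⬝ᵥ v = ((l2norm v ^ 2 : ℝ) : ℂ) := by
  have h := inner_self_eq_norm_sq_to_K (𝕜 := ℂ) (WithLp.toLp 2 v)
  rw [EuclideanSpace.inner_eq_star_dotProduct, dotProduct_comm] at h
  rw [l2norm_eq_norm, Complex.ofReal_pow]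
  exact h

lemma l2norm_mulVec_of_mem_unitaryGroup {W : Matrix (Fin k) (Fin k) ℂ}
    (hW : W ∈ unitaryGroup (Fin k) ℂ) (x : Fin k → ℂ) : l2norm (W *ᵥ x) = l2norm x := by
  have h : star (W *ᵥ x) ⬝ᵥ (W *ᵥ x) = star x ⬝ᵥ x := by
    rw [star_mulVec, dotProduct_mulVec, vecMul_vecMul, ← star_eq_conjTranspose,
      mem_unitaryGroup_iff'.mp hW, vecMul_one]
  rw [star_dotProduct_self, star_dotProduct_self] at h
  exact (pow_left_inj₀ (l2norm_nonneg _) (l2norm_nonneg _) two_ne_zero).mp (by exact_mod_cast h)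

lemma l2norm_le_mul_of_sum_le {u : Fin k → ℂ} {v : Fin l → ℂ} {b : ℝ} (hb : 0 ≤ b)
    (h : ∑ i, ‖u i‖ ^ 2 ≤ b ^ 2 * ∑ j, ‖v j‖ ^ 2) : l2norm u ≤ b * l2norm v := by
  rw [l2norm, l2norm, ← Real.sqrt_sq hb, ← Real.sqrt_mul (sq_nonneg b)]
  exact Real.sqrt_le_sqrt h

lemma mul_l2norm_le_of_le_sum {u : Fin k → ℂ} {v : Fin l → ℂ} {b : ℝ} (hb : 0 ≤ b)
    (h : b ^ 2 * ∑ j, ‖v j‖ ^ 2 ≤ ∑ i, ‖u i‖ ^ 2) : b * l2norm v ≤ l2norm u := by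
  rw [l2norm, l2norm, ← Real.sqrt_sq hb, ← Real.sqrt_mul (sq_nonneg b)]
  exact Real.sqrt_le_sqrt h

lemma l2norm_ofReal_mul_le {w : Fin k → ℝ} {c : Fin k → ℂ} {b : ℝ} (hb : 0 ≤ b)
    (h : ∀ j, c j ≠ 0 → |w j| ≤ b) : l2norm (fun j => (w j : ℂ) * c j) ≤ b * l2norm c := by
  refine l2norm_le_mul_of_sum_le hb ?_
  rw [Finset.mul_sum]
  refine Finset.sum_le_sum fun j _ => ?_
  rw [norm_mul, Complex.norm_real, Real.norm_eq_abs, mul_pow]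
  by_cases hc : c j = 0
  · simp [hc]
  · gcongr
    exact h j hc

lemma mul_l2norm_le_ofReal_mul {w : Fin k → ℝ} {c : Fin k → ℂ} {b : ℝ} (hb : 0 ≤ b)
    (h : ∀ j, c j ≠ 0 → b ≤ |w j|) : b * l2norm c ≤ l2norm (fun j => (w j : ℂ) * c j) := by
  refine mul_l2norm_le_of_le_sum hb ?_
  rw [Finset.mul_sum]
  refine Finset.sum_le_sum fun j _ => ?_
  rw [norm_mul, Complex.norm_real, Real.norm_eq_abs, mul_pow]
  by_cases hc : c j = 0
  · simp [hc]
  · gcongr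
    exact h j hc

end L2Norm

section SpecNorm

open scoped Matrix.Norms.L2Operator

variable {p q : ℕ}

lemma l2norm_mulVec_le_l2OpNorm (A : Matrix (Fin p) (Fin q) ℂ) (x : Fin q → ℂ) :
    l2norm (A *ᵥ x) ≤ ‖A‖ * l2norm x := by
  rw [l2norm_eq_norm, l2norm_eq_norm]
  exact A.l2_opNorm_mulVec (WithLp.toLp 2 x)

lemma specNorm_nonneg (A : Matrix (Fin p) (Fin q) ℂ) : 0 ≤ specNorm A :=
  Real.iSup_nonneg fun _ => Real.sqrt_nonneg _

lemma l2OpNorm_le_specNorm (A : Matrix (Fin p) (Fin q) ℂ) : ‖A‖ ≤ specNorm A := by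
  set hB := isHermitian_mul_conjTranspose_self A
  have hc := specNorm_nonneg A
  have heig : ∀ i, ‖((RCLike.ofReal ∘ hB.eigenvalues) i : ℂ)‖ ≤ specNorm A * specNorm A := by
    intro i
    have h0 : 0 ≤ hB.eigenvalues i := eigenvalues_self_mul_conjTranspose_nonneg A i
    have hle : √(hB.eigenvalues i) ≤ specNorm A :=
      le_ciSup (f := fun i => √(hB.eigenvalues i)) (Set.finite_range _).bddAbove i
    rw [Function.comp_apply, RCLike.norm_ofReal, abs_of_nonneg h0, ← Real.mul_self_sqrt h0]
    exact mul_self_le_mul_self (Real.sqrt_nonneg _) hle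
  have hsq : ‖A‖ * ‖A‖ ≤ specNorm A * specNorm A :=
    calc ‖A‖ * ‖A‖ = ‖A * Aᴴ‖ := by
          rw [← l2_opNorm_conjTranspose A, ← l2_opNorm_conjTranspose_mul_self,
            conjTranspose_conjTranspose]
      _ = ‖diagonal (RCLike.ofReal ∘ hB.eigenvalues)‖ := by
          conv_lhs => rw [hB.spectral_theorem]
          rw [Unitary.conjStarAlgAut_apply,
            CStarRing.norm_mul_mem_unitary _ (Unitary.star_mem (SetLike.coe_mem _)),
            CStarRing.norm_coe_unitary_mul]
      _ ≤ specNorm A * specNorm A := by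
          rw [l2_opNorm_diagonal]
          exact pi_norm_le_iff_of_nonneg (mul_nonneg hc hc) |>.mpr heig
  exact mul_self_le_mul_self_iff (norm_nonneg A) hc |>.mpr hsq

lemma l2norm_mulVec_le_specNorm (A : Matrix (Fin p) (Fin q) ℂ) (x : Fin q → ℂ) :
    l2norm (A *ᵥ x) ≤ specNorm A * l2norm x :=
  (l2norm_mulVec_le_l2OpNorm A x).trans
    (mul_le_mul_of_nonneg_right (l2OpNorm_le_specNorm A) (l2norm_nonneg x))

end SpecNorm

lemma exists_ne_zero_mulVec_eq_zero {K m n : Type*} [Field K] [Fintype m] [Fintype n]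
    (A : Matrix m n K) (h : Fintype.card m < Fintype.card n) : ∃ x ≠ 0, A *ᵥ x = 0 := by
  have hker : LinearMap.ker A.mulVecLin ≠ ⊥ :=
    LinearMap.ker_ne_bot_of_finrank_lt (by simpa using h)
  obtain ⟨x, hx, hx0⟩ := Submodule.exists_mem_ne_zero_of_ne_bot hker
  exact ⟨x, hx0, hx⟩

section ExtendByZero

variable {R : Type*} [Zero R] {k : ℕ}

def extendByZero (v : Fin k → R) (t : ℕ) : R :=
  if h : t < k then v ⟨t, h⟩ else 0

@[simp] lemma extendByZero_coe (v : Fin k → R) (i : Fin k) : extendByZero v i = v i := by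
  simp [extendByZero]

lemma extendByZero_of_le (v : Fin k → R) {t : ℕ} (ht : k ≤ t) : extendByZero v t = 0 := by
  simp [extendByZero, Nat.not_lt.mpr ht]

lemma extendByZero_eq_zero {n : ℕ} {v : Fin k → R} (hv : ∀ i : Fin k, n ≤ (i : ℕ) → v i = 0)
    {t : ℕ} (ht : n ≤ t) : extendByZero v t = 0 := by
  by_cases htk : t < k
  · simpa [extendByZero, htk] using hv ⟨t, htk⟩ ht
  · exact extendByZero_of_le v (Nat.not_lt.mp htk)

lemma extendByZero_nonneg {σ : Fin k → ℝ} (h0 : ∀ i, 0 ≤ σ i) (t : ℕ) :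
    0 ≤ extendByZero σ t := by
  unfold extendByZero
  split_ifs
  exacts [h0 _, le_rfl]

lemma antitone_extendByZero {σ : Fin k → ℝ} (hσ : Antitone σ) (h0 : ∀ i, 0 ≤ σ i) :
    Antitone (extendByZero σ) := by
  intro s t hst
  by_cases ht : t < k
  · simpa [extendByZero, ht, hst.trans_lt ht] using hσ (Fin.mk_le_mk.mpr hst)
  · rw [extendByZero_of_le σ (Nat.not_lt.mp ht)]
    exact extendByZero_nonneg h0 s

lemma sum_fin_eq_sum_fin {M : Type*} [AddCommMonoid M] {p q : ℕ} {G : ℕ → M}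
    (hp : ∀ t, p ≤ t → G t = 0) (hq : ∀ t, q ≤ t → G t = 0) :
    ∑ i : Fin p, G i = ∑ j : Fin q, G j := by
  have hrange : ∀ {r : ℕ}, r ≤ max p q → (∀ t, r ≤ t → G t = 0) →
      ∑ i : Fin r, G i = ∑ t ∈ Finset.range (max p q), G t := fun hr hG => by
    rw [Fin.sum_univ_eq_sum_range G]
    exact Finset.sum_subset (Finset.range_mono hr) fun t _ ht => hG t (by simpa using ht)
  rw [hrange (le_max_left p q) hp, hrange (le_max_right p q) hq]

end ExtendByZero

section RectDiag

variable {k p q : ℕ}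

def rectDiag (p q : ℕ) (σ : Fin p → ℝ) : Matrix (Fin p) (Fin q) ℂ :=
  Matrix.of fun i j => if (i : ℕ) = (j : ℕ) then (σ i : ℂ) else 0

lemma rectDiag_mulVec_apply (σ : Fin p → ℝ) (c : Fin q → ℂ) (i : Fin p) :
    (rectDiag p q σ *ᵥ c) i = σ i * extendByZero c i := by
  by_cases hi : (i : ℕ) < q
  · rw [mulVec, dotProduct, Finset.sum_eq_single ⟨i, hi⟩]
    · simp [rectDiag, extendByZero, hi]
    · intro j _ hj
      simp [rectDiag, show (i : ℕ) ≠ j from fun h => hj (Fin.ext h.symm)]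
    · simp
  · rw [extendByZero_of_le c (Nat.not_lt.mp hi), mul_zero, mulVec, dotProduct]
    refine Finset.sum_eq_zero fun j _ => ?_
    simp [rectDiag, show (i : ℕ) ≠ j by omega]

lemma l2norm_rectDiag_mulVec (σ : Fin p → ℝ) (c : Fin q → ℂ) :
    l2norm (rectDiag p q σ *ᵥ c) = l2norm (fun j => ((extendByZero σ j : ℝ) : ℂ) * c j) := by
  unfold l2norm
  congr 1
  have hG := sum_fin_eq_sum_fin (p := p) (q := q)
    (G := fun t => ‖((extendByZero σ t : ℝ) : ℂ) * extendByZero c t‖ ^ 2)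
    (fun t ht => by simp [extendByZero_of_le σ ht])
    (fun t ht => by simp [extendByZero_of_le c ht])
  simpa [rectDiag_mulVec_apply] using hG

lemma l2norm_mul_rectDiag_mulVec {U : Matrix (Fin p) (Fin p) ℂ}
    (hU : U ∈ unitaryGroup (Fin p) ℂ) (σ : Fin p → ℝ) (W : Matrix (Fin q) (Fin q) ℂ)
    (x : Fin q → ℂ) :
    l2norm ((U * rectDiag p q σ * W) *ᵥ x)
      = l2norm (fun j => ((extendByZero σ j : ℝ) : ℂ) * (W *ᵥ x) j) := by
  rw [← mulVec_mulVec, ← mulVec_mulVec, l2norm_mulVec_of_mem_unitaryGroup hU,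
    l2norm_rectDiag_mulVec]

lemma extendByZero_rectDiag_mulVec (τ : Fin q → ℝ) (y : Fin p → ℂ) (t : ℕ) :
    extendByZero (rectDiag q p τ *ᵥ y) t = extendByZero τ t * extendByZero y t := by
  by_cases ht : t < q
  · simp [extendByZero, ht, rectDiag_mulVec_apply]
  · simp [extendByZero_of_le _ (Nat.not_lt.mp ht)]

end RectDiag

section SVD

variable {p q : ℕ}

lemma conjTranspose_mem_unitaryGroup {W : Matrix (Fin p) (Fin p) ℂ}
    (hW : W ∈ unitaryGroup (Fin p) ℂ) : Wᴴ ∈ unitaryGroup (Fin p) ℂ :=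
  Unitary.star_mem hW

variable {K : Matrix (Fin p) (Fin q) ℂ} {U : Matrix (Fin p) (Fin p) ℂ} {σ : Fin p → ℝ}
  {V : Matrix (Fin q) (Fin q) ℂ}

lemma IsSVD.eq_mul_rectDiag (h : IsSVD K U σ V) : K = U * rectDiag p q σ * Vᴴ :=
  h.2.2.2.2

/- Seen from the right, the singular values are `extendByZero σ j` for `j : Fin q`: the entries
`σ i` with `q ≤ i` are unconstrained padding, and indices `p ≤ j < q` carry the value `0`. -/
lemma IsSVD.l2norm_mulVec (h : IsSVD K U σ V) (x : Fin q → ℂ) :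
    l2norm (K *ᵥ x) = l2norm (fun j => ((extendByZero σ j : ℝ) : ℂ) * (Vᴴ *ᵥ x) j) := by
  rw [h.eq_mul_rectDiag]
  exact l2norm_mul_rectDiag_mulVec h.1 σ _ x

lemma IsSVD.mul_l2norm_le_l2norm_mulVec (h : IsSVD K U σ V) {k : ℕ} {x : Fin q → ℂ}
    (hx : ∀ j : Fin q, k < j → (Vᴴ *ᵥ x) j = 0) :
    extendByZero σ k * l2norm x ≤ l2norm (K *ᵥ x) := by
  rw [h.l2norm_mulVec]
  obtain ⟨-, hV, hσ, h0, -⟩ := h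
  rw [← l2norm_mulVec_of_mem_unitaryGroup (conjTranspose_mem_unitaryGroup hV) x]
  refine mul_l2norm_le_ofReal_mul (extendByZero_nonneg h0 k) fun j hj => ?_
  rw [abs_of_nonneg (extendByZero_nonneg h0 j)]
  exact antitone_extendByZero hσ h0 (Nat.not_lt.mp (mt (hx j) hj))

lemma IsSVD.l2norm_mulVec_le_mul_l2norm (h : IsSVD K U σ V) {k : ℕ} {x : Fin q → ℂ}
    (hx : ∀ j : Fin q, (j : ℕ) < k → (Vᴴ *ᵥ x) j = 0) :
    l2norm (K *ᵥ x) ≤ extendByZero σ k * l2norm x := by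
  rw [h.l2norm_mulVec]
  obtain ⟨-, hV, hσ, h0, -⟩ := h
  rw [← l2norm_mulVec_of_mem_unitaryGroup (conjTranspose_mem_unitaryGroup hV) x]
  refine l2norm_ofReal_mul_le (extendByZero_nonneg h0 k) fun j hj => ?_
  rw [abs_of_nonneg (extendByZero_nonneg h0 j)]
  exact antitone_extendByZero hσ h0 (Nat.not_lt.mp (mt (hx j) hj))

end SVD

section Weyl

variable {p q : ℕ} {A B : Matrix (Fin p) (Fin q) ℂ} {UA UB : Matrix (Fin p) (Fin p) ℂ}
  {σA σB : Fin p → ℝ} {VA VB : Matrix (Fin q) (Fin q) ℂ}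

theorem IsSVD.extendByZero_le_add (hA : IsSVD A UA σA VA) (hB : IsSVD B UB σB VB) {e : ℝ}
    (hAB : ∀ x, l2norm (A *ᵥ x) ≤ l2norm (B *ᵥ x) + e * l2norm x) (k : Fin q) :
    extendByZero σA k ≤ extendByZero σB k + e := by
  -- `R x = 0` puts `x` in the span of the first `k + 1` right singular vectors of `A` and makes
  -- it orthogonal to the first `k` of `B`; with only `q - 1` rows, `R` has a nonzero kernel.
  let R : Matrix {j : Fin q // j ≠ k} (Fin q) ℂ :=
    Matrix.of fun j => if (j : Fin q) < k then VBᴴ j else VAᴴ j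
  obtain ⟨x, hx0, hRx⟩ := exists_ne_zero_mulVec_eq_zero R (by
    rw [Fintype.card_subtype_compl, Fintype.card_subtype_eq, Fintype.card_fin]
    have := k.isLt
    omega)
  have hR : ∀ j, (R *ᵥ x) j = if (j : Fin q) < k then (VBᴴ *ᵥ x) j else (VAᴴ *ᵥ x) j :=
    fun j => by simp only [R, mulVec, of_apply]; split_ifs <;> rfl
  have hxA : ∀ j : Fin q, (k : ℕ) < j → (VAᴴ *ᵥ x) j = 0 := fun j hj => by
    simpa [hR, Fin.lt_def, hj.not_gt] using congrFun hRx ⟨j, Fin.ne_of_gt hj⟩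
  have hxB : ∀ j : Fin q, (j : ℕ) < k → (VBᴴ *ᵥ x) j = 0 := fun j hj => by
    simpa [hR, Fin.lt_def.mpr hj] using congrFun hRx ⟨j, Fin.ne_of_lt hj⟩
  refine le_of_mul_le_mul_right ?_ (l2norm_pos hx0)
  calc extendByZero σA k * l2norm x ≤ l2norm (A *ᵥ x) := hA.mul_l2norm_le_l2norm_mulVec hxA
    _ ≤ l2norm (B *ᵥ x) + e * l2norm x := hAB x
    _ ≤ (extendByZero σB k + e) * l2norm x := by
      rw [add_mul]
      gcongr
      exact hB.l2norm_mulVec_le_mul_l2norm hxB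

theorem IsSVD.abs_sub_extendByZero_le {E : Matrix (Fin p) (Fin q) ℂ}
    (hAE : IsSVD (A + E) UA σA VA) (hA : IsSVD A UB σB VB) {e : ℝ}
    (hE : ∀ x, l2norm (E *ᵥ x) ≤ e * l2norm x) (k : Fin q) :
    |extendByZero σA k - extendByZero σB k| ≤ e := by
  have hup := hAE.extendByZero_le_add hA (e := e) fun x => by
    rw [add_mulVec]
    exact (l2norm_add_le _ _).trans (add_le_add_right (hE x) _)
  have hdown := hA.extendByZero_le_add hAE (e := e) fun x => by
    rw [show A *ᵥ x = (A + E) *ᵥ x - E *ᵥ x by rw [add_mulVec, add_sub_cancel_right]]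
    exact (l2norm_sub_le _ _).trans (add_le_add_right (hE x) _)
  rw [abs_sub_le_iff]
  constructor <;> linarith [hup k, hdown k]

theorem IsSVD.extendByZero_le_of_eq_zero {E : Matrix (Fin p) (Fin q) ℂ}
    (hAE : IsSVD (A + E) UA σA VA) (hA : IsSVD A UB σB VB) {e : ℝ}
    (hE : ∀ x, l2norm (E *ᵥ x) ≤ e * l2norm x) {n : ℕ}
    (hσB : ∀ i : Fin p, n ≤ (i : ℕ) → σB i = 0) (j : Fin q) (hj : n ≤ (j : ℕ)) :
    extendByZero σA j ≤ e := by
  have := (abs_sub_le_iff.mp (hAE.abs_sub_extendByZero_le hA hE j)).1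
  rw [extendByZero_eq_zero hσB hj] at this
  linarith

theorem IsSVD.sub_le_of_le {E : Matrix (Fin p) (Fin q) ℂ}
    (hAE : IsSVD (A + E) UA σA VA) (hA : IsSVD A UB σB VB) {e : ℝ}
    (hE : ∀ x, l2norm (E *ᵥ x) ≤ e * l2norm x) {n : ℕ} (hnq : n ≤ q) {ε : ℝ}
    (hσB : ∀ i : Fin p, (i : ℕ) < n → ε ≤ σB i) (i : Fin p) (hi : (i : ℕ) < n) :
    ε - e ≤ σA i := by
  have := (abs_sub_le_iff.mp (hAE.abs_sub_extendByZero_le hA hE ⟨i, hi.trans_le hnq⟩)).2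
  simp only [extendByZero_coe] at this
  linarith [hσB i hi]

end Weyl

section NoiseProj

variable {p q : ℕ} {U : Matrix (Fin p) (Fin p) ℂ}

lemma noiseProj_mulVec (n : ℕ) (U : Matrix (Fin p) (Fin p) ℂ) (x : Fin p → ℂ) :
    noiseProj n U *ᵥ x
      = U *ᵥ fun i => ((if n ≤ (i : ℕ) then 1 else 0 : ℝ) : ℂ) * (Uᴴ *ᵥ x) i := by
  rw [noiseProj, ← mulVec_mulVec, ← mulVec_mulVec]
  congr 1
  ext i
  rw [mulVec_diagonal]
  split_ifs <;> simp

lemma l2norm_noiseProj_mulVec_le (n : ℕ) (hU : U ∈ unitaryGroup (Fin p) ℂ) (x : Fin p → ℂ) :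
    l2norm (noiseProj n U *ᵥ x) ≤ l2norm x := by
  rw [noiseProj_mulVec, l2norm_mulVec_of_mem_unitaryGroup hU,
    ← l2norm_mulVec_of_mem_unitaryGroup (conjTranspose_mem_unitaryGroup hU) x]
  refine (l2norm_ofReal_mul_le zero_le_one fun i _ => ?_).trans_eq (one_mul _)
  split_ifs <;> simp

variable {K : Matrix (Fin p) (Fin q) ℂ} {σ : Fin p → ℝ} {V : Matrix (Fin q) (Fin q) ℂ}

theorem IsSVD.l2norm_noiseProj_mulVec_le (h : IsSVD K U σ V) {n : ℕ} {b : ℝ} (hb : 0 ≤ b)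
    (hσ : ∀ j : Fin q, n ≤ (j : ℕ) → extendByZero σ j ≤ b) (x : Fin q → ℂ) :
    l2norm (noiseProj n U *ᵥ (K *ᵥ x)) ≤ b * l2norm x := by
  have htail : Uᴴ *ᵥ (K *ᵥ x) = rectDiag p q σ *ᵥ (Vᴴ *ᵥ x) := by
    have hUU : Uᴴ * U = 1 := mem_unitaryGroup_iff'.mp h.1
    rw [h.eq_mul_rectDiag, ← mulVec_mulVec, ← mulVec_mulVec, mulVec_mulVec, hUU, one_mulVec]
  obtain ⟨hU, hV, -, h0, -⟩ := h
  have hcut : (fun i : Fin p =>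
        ((if n ≤ (i : ℕ) then 1 else 0 : ℝ) : ℂ) * (rectDiag p q σ *ᵥ (Vᴴ *ᵥ x)) i)
      = rectDiag p q (fun i => if n ≤ (i : ℕ) then σ i else 0) *ᵥ (Vᴴ *ᵥ x) := by
    ext i
    rw [rectDiag_mulVec_apply, rectDiag_mulVec_apply]
    split_ifs <;> simp
  rw [noiseProj_mulVec, l2norm_mulVec_of_mem_unitaryGroup hU, htail, hcut,
    l2norm_rectDiag_mulVec,
    ← l2norm_mulVec_of_mem_unitaryGroup (conjTranspose_mem_unitaryGroup hV) x]
  refine l2norm_ofReal_mul_le hb fun j _ => ?_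
  by_cases hj : n ≤ (j : ℕ)
  · have hext : extendByZero (fun i : Fin p => if n ≤ (i : ℕ) then σ i else 0) j
        = extendByZero σ j := by
      simp [extendByZero, hj]
    rw [hext, abs_of_nonneg (extendByZero_nonneg h0 j)]
    exact hσ j hj
  · simpa [extendByZero, hj] using hb

theorem IsSVD.exists_mulVec_eq_sub_noiseProj_mulVec (h : IsSVD K U σ V) {n : ℕ} (hnq : n ≤ q)
    {μ : ℝ} (hμ : 0 < μ) (hσ : ∀ i : Fin p, (i : ℕ) < n → μ ≤ σ i) (v : Fin p → ℂ) :
    ∃ w, K *ᵥ w = v - noiseProj n U *ᵥ v ∧ l2norm w ≤ l2norm v / μ := by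
  -- `V * rectDiag q p τ * Uᴴ` is the pseudo-inverse of `K` truncated to its first `n`
  -- singular values.
  set τ : Fin q → ℝ := fun j => if (j : ℕ) < n then (extendByZero σ j)⁻¹ else 0
  have hτ : ∀ i : Fin p, extendByZero τ i = if (i : ℕ) < n then (σ i)⁻¹ else 0 := fun i => by
    by_cases hi : (i : ℕ) < n
    · simp [τ, extendByZero, hi, hi.trans_le hnq]
    · simp [τ, extendByZero, hi]
  set y := Uᴴ *ᵥ v
  refine ⟨V *ᵥ (rectDiag q p τ *ᵥ y), ?_, ?_⟩
  · have hVV : Vᴴ * V = 1 := mem_unitaryGroup_iff'.mp h.2.1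
    have hUU : U * Uᴴ = 1 := mem_unitaryGroup_iff.mp h.1
    have hsig : v - noiseProj n U *ᵥ v
        = U *ᵥ fun i => ((if (i : ℕ) < n then 1 else 0 : ℝ) : ℂ) * y i := by
      rw [noiseProj_mulVec]
      nth_rewrite 1 [← one_mulVec v]
      rw [← hUU, ← mulVec_mulVec, ← mulVec_sub]
      congr 1
      ext i
      by_cases hi : (i : ℕ) < n
      · simp [y, hi, hi.not_ge]
      · simp [hi, Nat.not_lt.mp hi]
    rw [hsig, h.eq_mul_rectDiag, ← mulVec_mulVec, ← mulVec_mulVec, mulVec_mulVec _ Vᴴ V, hVV,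
      one_mulVec]
    congr 1
    ext i
    rw [rectDiag_mulVec_apply, extendByZero_rectDiag_mulVec, hτ, extendByZero_coe]
    split_ifs with hi
    · have hσi : (σ i : ℂ) ≠ 0 := Complex.ofReal_ne_zero.2 (hμ.trans_le (hσ i hi)).ne'
      push_cast
      field_simp
    · simp
  · rw [l2norm_mulVec_of_mem_unitaryGroup h.2.1, l2norm_rectDiag_mulVec, div_eq_inv_mul,
      ← l2norm_mulVec_of_mem_unitaryGroup (conjTranspose_mem_unitaryGroup h.1) v]
    refine l2norm_ofReal_mul_le (inv_nonneg.2 hμ.le) fun i _ => ?_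
    rw [hτ]
    split_ifs with hi
    · have hσi := hσ i hi
      rw [abs_of_pos (inv_pos.2 (hμ.trans_le hσi))]
      exact inv_anti₀ hμ hσi
    · simpa using hμ.le

end NoiseProj

section Perturbation

variable {p q n : ℕ}

theorem IsSVD.l2norm_mulVec_le_add_noiseProj {K : Matrix (Fin p) (Fin q) ℂ}
    {U : Matrix (Fin p) (Fin p) ℂ} {σ : Fin p → ℝ} {V : Matrix (Fin q) (Fin q) ℂ}
    (hK : IsSVD K U σ V) (hnq : n ≤ q) {μ : ℝ} (hμ : 0 < μ)
    (hσ : ∀ i : Fin p, (i : ℕ) < n → μ ≤ σ i) {P : Matrix (Fin p) (Fin p) ℂ}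
    (hP : ∀ x, l2norm (P *ᵥ x) ≤ l2norm x) {c : ℝ} (hc : 0 ≤ c)
    (hPK : ∀ w, l2norm (P *ᵥ (K *ᵥ w)) ≤ c * l2norm w) (v : Fin p → ℂ) :
    l2norm (P *ᵥ v) ≤ l2norm (noiseProj n U *ᵥ v) + c / μ * l2norm v := by
  obtain ⟨w, hKw, hw⟩ := hK.exists_mulVec_eq_sub_noiseProj_mulVec hnq hμ hσ v
  calc l2norm (P *ᵥ v) = l2norm (P *ᵥ (noiseProj n U *ᵥ v) + P *ᵥ (K *ᵥ w)) := by
        rw [hKw, ← mulVec_add, add_sub_cancel]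
    _ ≤ l2norm (noiseProj n U *ᵥ v) + c * l2norm w :=
        (l2norm_add_le _ _).trans (add_le_add (hP _) (hPK w))
    _ ≤ l2norm (noiseProj n U *ᵥ v) + c / μ * l2norm v := by
        rw [div_mul_eq_mul_div, mul_div_assoc]
        gcongr

theorem abs_l2norm_noiseProj_mulVec_sub_le (hnq : n ≤ q) {Hs E : Matrix (Fin p) (Fin q) ℂ}
    {U Us : Matrix (Fin p) (Fin p) ℂ} {σ σs : Fin p → ℝ} {V Vs : Matrix (Fin q) (Fin q) ℂ}
    (hH : IsSVD (Hs + E) U σ V) (hHs : IsSVD Hs Us σs Vs)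
    (hσs_zero : ∀ i : Fin p, n ≤ (i : ℕ) → σs i = 0) {ε e : ℝ}
    (hσs : ∀ i : Fin p, (i : ℕ) < n → ε ≤ σs i) (he : 0 ≤ e)
    (hE : ∀ x, l2norm (E *ᵥ x) ≤ e * l2norm x) (hεe : 2 * e < ε) (v : Fin p → ℂ) :
    |l2norm (noiseProj n U *ᵥ v) - l2norm (noiseProj n Us *ᵥ v)| ≤ 2 * e / ε * l2norm v := by
  have hε : 0 < ε := by linarith
  have hP := l2norm_noiseProj_mulVec_le n hH.1
  have hPs := l2norm_noiseProj_mulVec_le n hHs.1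
  have hPHs : ∀ w, l2norm (noiseProj n U *ᵥ (Hs *ᵥ w)) ≤ 2 * e * l2norm w := fun w =>
    calc l2norm (noiseProj n U *ᵥ (Hs *ᵥ w))
        ≤ l2norm (noiseProj n U *ᵥ ((Hs + E) *ᵥ w)) + l2norm (noiseProj n U *ᵥ (E *ᵥ w)) := by
          rw [← add_sub_cancel_right (Hs *ᵥ w) (E *ᵥ w), ← add_mulVec, mulVec_sub]
          exact l2norm_sub_le _ _
      _ ≤ e * l2norm w + e * l2norm w := add_le_add
          (hH.l2norm_noiseProj_mulVec_le he (hH.extendByZero_le_of_eq_zero hHs hE hσs_zero) w)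
          ((hP _).trans (hE w))
      _ = 2 * e * l2norm w := by ring
  have hPsH : ∀ w, l2norm (noiseProj n Us *ᵥ ((Hs + E) *ᵥ w)) ≤ e * l2norm w := fun w =>
    calc l2norm (noiseProj n Us *ᵥ ((Hs + E) *ᵥ w))
        ≤ l2norm (noiseProj n Us *ᵥ (Hs *ᵥ w)) + l2norm (noiseProj n Us *ᵥ (E *ᵥ w)) := by
          rw [add_mulVec, mulVec_add]
          exact l2norm_add_le _ _
      _ ≤ 0 * l2norm w + e * l2norm w := add_le_add
          (hHs.l2norm_noiseProj_mulVec_le le_rfl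
            (fun j hj => (extendByZero_eq_zero hσs_zero hj).le) w)
          ((hPs _).trans (hE w))
      _ = e * l2norm w := by ring
  have hnoisy := hHs.l2norm_mulVec_le_add_noiseProj hnq hε hσs hP (by linarith) hPHs v
  have hideal := hH.l2norm_mulVec_le_add_noiseProj hnq (by linarith : 0 < ε - e)
    (hH.sub_le_of_le hHs hE hnq hσs) hPs he hPsH v
  have hratio : e / (ε - e) ≤ 2 * e / ε := by
    rw [div_le_div_iff₀ (by linarith) hε]
    nlinarith
  have := mul_le_mul_of_nonneg_right hratio (l2norm_nonneg v)
  rw [abs_sub_le_iff]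
  constructor <;> linarith

end Perturbation

lemma hankelMat_add (M L : ℕ) (hLM : L ≤ M) (v w : Fin (M + 1) → ℂ) :
    hankelMat M L hLM (v + w) = hankelMat M L hLM v + hankelMat M L hLM w :=
  rfl

end RB

open RB in
/-- MUSIC noise-correlation function bound: if the ideal Hankel matrix has rank exactly `n`
with smallest nonzero singular value `ε_min` and `2‖E‖ < ε_min`, then the noise-space
correlation function of the perturbed Hankel matrix deviates from the ideal one by at most
`2‖E‖/ε_min`, uniformly in `z`. -/
theorem music_noise_correlation_bound
    (M L n : ℕ) (hLM : L < M)
    (hLn : n ≤ L) (hMLn : n ≤ M - L + 1)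
    (s α : Fin (M + 1) → ℂ)
    -- SVD of the noisy Hankel matrix `H = Hankel_L(s + α)`
    (U : Matrix (Fin (L + 1)) (Fin (L + 1)) ℂ) (σH : Fin (L + 1) → ℝ)
    (V : Matrix (Fin (M - L + 1)) (Fin (M - L + 1)) ℂ)
    (hH : IsSVD (hankelMat M L hLM.le (s + α)) U σH V)
    -- SVD of the ideal Hankel matrix `H_s = Hankel_L(s)`
    (Us : Matrix (Fin (L + 1)) (Fin (L + 1)) ℂ) (σs : Fin (L + 1) → ℝ)
    (Vs : Matrix (Fin (M - L + 1)) (Fin (M - L + 1)) ℂ)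
    (hHs : IsSVD (hankelMat M L hLM.le s) Us σs Vs)
    -- `H_s` has rank exactly `n`:
    (hσs_zero : ∀ i : Fin (L + 1), n ≤ (i : ℕ) → σs i = 0)
    -- the smallest nonzero singular value of `H_s`
    (εmin : ℝ) (hεmin : εmin = σs ⟨n - 1, by omega⟩)
    (hE : 2 * specNorm (hankelMat M L hLM.le α) < εmin) :
    ∀ z : ℂ,
      |musicR (noiseProj n U) z - musicR (noiseProj n Us) z|
        ≤ 2 * specNorm (hankelMat M L hLM.le α) / εmin := by
  intro z
  have hσs : ∀ i : Fin (L + 1), (i : ℕ) < n → εmin ≤ σs i := fun i hi =>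
    hεmin ▸ hHs.2.2.1 (Fin.mk_le_mk.mpr (by omega))
  have hv : 0 < l2norm fun i : Fin (L + 1) => z ^ (i : ℕ) :=
    l2norm_pos fun h => by simpa using congrFun h 0
  rw [hankelMat_add] at hH
  rw [musicR, musicR, div_sub_div_same, abs_div, abs_of_pos hv, div_le_iff₀ hv]
  exact abs_l2norm_noiseProj_mulVec_sub_le hMLn hH hHs hσs_zero hσs (specNorm_nonneg _)
    (l2norm_mulVec_le_specNorm _) hE _
end

section
/- The Fourier transform of a representation is an orthogonal projection of rank equal to the multiplicity. Let G be a finite group, ω a finite-dimensional unitary matrix representation of G, and σ an irreducible unitary matrix representation of G. Then F(ω)[σ] satisfies (F(ω)[σ])² = F(ω)[σ] and F(ω)[σ]† = F(ω)[σ] (it is an orthogonal projection), and tr(F(ω)[σ]) = (1/|G|) Σ_{g∈G} conj(χ_σ(g))·χ_ω(g), the multiplicity of σ in ω; in particular F(ω)[σ] = 0 if and only if σ does not occur as a subrepresentation of ω. -/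
open scoped Matrix Kronecker BigOperators

namespace RB

variable {G : Type} [Group G] [Fintype G]

/-- Convolution of matrix-valued maps on a finite group:
`(φ * φ')(g) = |G|⁻¹ Σ_{g'} φ(g g'⁻¹) φ'(g')`. -/
noncomputable def convMap {d' : ℕ} (φ φ' : G → Matrix (Fin d') (Fin d') ℂ) :
    G → Matrix (Fin d') (Fin d') ℂ :=
  fun g => (Fintype.card G : ℂ)⁻¹ • ∑ g' : G, φ (g * g'⁻¹) * φ' g'

/-- The matrix-valued Fourier transform of `φ` at a representation `σ`:
`F(φ)[σ] = |G|⁻¹ Σ_g conj(σ(g)) ⊗ φ(g)`. -/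
noncomputable def fourierTransform {dσ d' : ℕ} (φ : G → Matrix (Fin d') (Fin d') ℂ)
    (σ : G → Matrix (Fin dσ) (Fin dσ) ℂ) :
    Matrix (Fin dσ × Fin d') (Fin dσ × Fin d') ℂ :=
  (Fintype.card G : ℂ)⁻¹ • ∑ g : G, ((σ g).map (starRingEnd ℂ)) ⊗ₖ (φ g)

/-- Partial trace over the first tensor factor. -/
noncomputable def partialTraceFst {a b : ℕ} (A : Matrix (Fin a × Fin b) (Fin a × Fin b) ℂ) :
    Matrix (Fin b) (Fin b) ℂ :=
  Matrix.of fun j k => ∑ i : Fin a, A (i, j) (i, k)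

/-- Irreducibility of a matrix representation: no nontrivial invariant subspace. -/
def Irreducible {k : ℕ} (σ : G →* Matrix (Fin k) (Fin k) ℂ) : Prop :=
  ∀ p : Submodule ℂ (Fin k → ℂ), (∀ g : G, ∀ x ∈ p, (σ g).mulVec x ∈ p) → p = ⊥ ∨ p = ⊤

/-- Equivalence of matrix representations: a bijective intertwiner. -/
def RepEquiv {k l : ℕ} (σ : G →* Matrix (Fin k) (Fin k) ℂ)
    (τ : G →* Matrix (Fin l) (Fin l) ℂ) : Prop :=
  ∃ T : Matrix (Fin k) (Fin l) ℂ,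
    Function.Bijective T.mulVecLin ∧ ∀ g : G, σ g * T = T * τ g

end RB

/-! `F(ω)[σ]` is the average over `G` of the representation `g ↦ conj σ(g) ⊗ ω(g)`, and the
average `P` of a representation `π` satisfies `π(h) P = P`; hence `P² = P`, `P` fixes every
`π`-invariant vector and has only invariant vectors in its range, so `P = 0` iff there are no
nonzero invariant vectors. For unitary `π` the sum is stable under `π(g) ↦ π(g)ᴴ = π(g⁻¹)`, so
`P` is self-adjoint. Under vectorization, `conj σ(g) ⊗ ω(g)` acts as `T ↦ ω(g) T σ(g)ᴴ`, whose
fixed points are the intertwiners `ω(g) T = T σ(g)`; the trace of a Kronecker product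
is the product of the traces. -/

theorem MonoidHom.star_apply_of_mem_unitary {G M : Type*} [Group G] [Monoid M] [StarMul M]
    (π : G →* M) {g : G} (hg : π g ∈ unitary M) : star (π g) = π g⁻¹ :=
  calc star (π g) = star (π g) * (π g * π g⁻¹) := by
        rw [← map_mul, mul_inv_cancel, map_one, mul_one]
    _ = π g⁻¹ := by rw [← mul_assoc, Unitary.star_mul_self_of_mem hg, one_mul]

theorem Matrix.mul_mul_conjTranspose_eq_iff_of_mem_unitary {m n R : Type*} [Fintype m]
    [DecidableEq m] [Fintype n] [CommRing R] [StarRing R] {U : Matrix m m R}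
    (hU : U ∈ unitary (Matrix m m R)) (A : Matrix n n R) (X : Matrix n m R) :
    A * X * Uᴴ = X ↔ A * X = X * U := by
  rw [← Matrix.star_eq_conjTranspose]
  refine ⟨fun h => ?_, fun h => ?_⟩
  · calc A * X = A * X * (star U * U) := by rw [Unitary.star_mul_self_of_mem hU, Matrix.mul_one]
      _ = X * U := by rw [← Matrix.mul_assoc, h]
  · rw [h, Matrix.mul_assoc, Unitary.mul_star_self_of_mem hU, Matrix.mul_one]

namespace RB

section GroupAverage

variable (G : Type*) [Group G] [Fintype G] {𝕜 : Type*} [Field 𝕜]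

theorem inv_card_smul_sum_const [CharZero 𝕜] {M : Type*} [AddCommGroup M] [Module 𝕜 M]
    (x : M) : (Fintype.card G : 𝕜)⁻¹ • ∑ _g : G, x = x := by
  rw [Finset.sum_const, Finset.card_univ, ← Nat.cast_smul_eq_nsmul 𝕜, smul_smul,
    inv_mul_cancel₀ (Nat.cast_ne_zero.2 Fintype.card_ne_zero), one_smul]

variable {G} (𝕜) {A : Type*} [Ring A] [Algebra 𝕜 A]

noncomputable def groupAverage (π : G →* A) : A :=
  (Fintype.card G : 𝕜)⁻¹ • ∑ g, π g

variable {𝕜}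

theorem mul_groupAverage (π : G →* A) (h : G) :
    π h * groupAverage 𝕜 π = groupAverage 𝕜 π := by
  rw [groupAverage, mul_smul_comm, Finset.mul_sum]
  congr 1
  exact Fintype.sum_equiv (Equiv.mulLeft h) _ _ fun g => (map_mul π h g).symm

theorem isIdempotentElem_groupAverage [CharZero 𝕜] (π : G →* A) :
    IsIdempotentElem (groupAverage 𝕜 π) := by
  nth_rw 1 [IsIdempotentElem, groupAverage]
  rw [smul_mul_assoc, Finset.sum_mul]
  simp_rw [mul_groupAverage]
  exact inv_card_smul_sum_const G _

theorem isSelfAdjoint_groupAverage [StarRing 𝕜] [StarRing A] [StarModule 𝕜 A] (π : G →* A)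
    (hπ : ∀ g, star (π g) = π g⁻¹) : IsSelfAdjoint (groupAverage 𝕜 π) := by
  rw [IsSelfAdjoint, groupAverage, star_smul, star_sum, star_inv₀, star_natCast]
  simp_rw [hπ]
  congr 1
  exact Fintype.sum_equiv (Equiv.inv G) _ _ fun _ => rfl

variable {n : Type*} [Fintype n] [DecidableEq n] [CharZero 𝕜] (π : G →* Matrix n n 𝕜)

theorem groupAverage_mulVec_of_forall_mulVec_eq {x : n → 𝕜} (hx : ∀ g, π g *ᵥ x = x) :
    groupAverage 𝕜 π *ᵥ x = x := by
  rw [groupAverage, Matrix.smul_mulVec, Matrix.sum_mulVec]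
  simp_rw [hx]
  exact inv_card_smul_sum_const G x

theorem groupAverage_eq_zero_iff :
    groupAverage 𝕜 π = 0 ↔ ∀ x : n → 𝕜, (∀ g, π g *ᵥ x = x) → x = 0 := by
  refine ⟨fun h x hx => ?_, fun h => Matrix.ext_iff_mulVec.2 fun x => ?_⟩
  · rw [← groupAverage_mulVec_of_forall_mulVec_eq π hx, h, Matrix.zero_mulVec]
  · rw [Matrix.zero_mulVec]
    exact h _ fun g => by rw [Matrix.mulVec_mulVec, mul_groupAverage]

end GroupAverage

section ConjKronecker

variable {G : Type*} [Group G] {R : Type*} [CommRing R] [StarRing R]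
  {m n : Type*} [Fintype m] [Fintype n] [DecidableEq m] [DecidableEq n]
  (σ : G →* Matrix m m R) (ω : G →* Matrix n n R)

def conjKroneckerHom : G →* Matrix (m × n) (m × n) R where
  toFun g := (σ g).map (starRingEnd R) ⊗ₖ ω g
  map_one' := by simp
  map_mul' g h := by rw [map_mul, map_mul, Matrix.map_mul, Matrix.mul_kronecker_mul]

theorem trace_conjKroneckerHom (g : G) :
    (conjKroneckerHom σ ω g).trace = starRingEnd R (σ g).trace * (ω g).trace := by
  rw [conjKroneckerHom, MonoidHom.coe_mk, OneHom.coe_mk, Matrix.trace_kronecker,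
    AddMonoidHom.map_trace]

theorem conjKroneckerHom_mulVec_vec (g : G) (T : Matrix n m R) :
    conjKroneckerHom σ ω g *ᵥ T.vec = (ω g * T * (σ g)ᴴ).vec :=
  Matrix.kronecker_mulVec_vec _ _ _

variable {σ ω}

theorem star_conjKroneckerHom (hσ : ∀ g, σ g ∈ unitary (Matrix m m R))
    (hω : ∀ g, ω g ∈ unitary (Matrix n n R)) (g : G) :
    star (conjKroneckerHom σ ω g) = conjKroneckerHom σ ω g⁻¹ := by
  rw [conjKroneckerHom, MonoidHom.coe_mk, OneHom.coe_mk, Matrix.star_eq_conjTranspose,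
    Matrix.conjTranspose_kronecker, ← Matrix.conjTranspose_map (starRingEnd R) fun _ => rfl,
    ← Matrix.star_eq_conjTranspose, ← Matrix.star_eq_conjTranspose,
    σ.star_apply_of_mem_unitary (hσ g), ω.star_apply_of_mem_unitary (hω g)]

end ConjKronecker

theorem fourierTransform_eq_groupAverage {G : Type} [Group G] [Fintype G] {dσ d' : ℕ}
    (φ : G →* Matrix (Fin d') (Fin d') ℂ) (σ : G →* Matrix (Fin dσ) (Fin dσ) ℂ) :
    fourierTransform (φ : G → Matrix (Fin d') (Fin d') ℂ) σ =
      groupAverage ℂ (conjKroneckerHom σ φ) :=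
  rfl

end RB

open RB in
theorem fourierTransform_of_representation_isProjection_general
    {G : Type} [Group G] [Fintype G]
    (k dσ : ℕ)
    (ω : G →* Matrix (Fin k) (Fin k) ℂ)
    (hω : ∀ g : G, ω g ∈ Matrix.unitaryGroup (Fin k) ℂ)
    (σ : G →* Matrix (Fin dσ) (Fin dσ) ℂ)
    (hσ : ∀ g : G, σ g ∈ Matrix.unitaryGroup (Fin dσ) ℂ) :
    (fourierTransform (ω : G → Matrix (Fin k) (Fin k) ℂ)
          (σ : G → Matrix (Fin dσ) (Fin dσ) ℂ) *
        fourierTransform (ω : G → Matrix (Fin k) (Fin k) ℂ)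
          (σ : G → Matrix (Fin dσ) (Fin dσ) ℂ)
      = fourierTransform (ω : G → Matrix (Fin k) (Fin k) ℂ)
          (σ : G → Matrix (Fin dσ) (Fin dσ) ℂ)) ∧
    ((fourierTransform (ω : G → Matrix (Fin k) (Fin k) ℂ)
          (σ : G → Matrix (Fin dσ) (Fin dσ) ℂ))ᴴ
      = fourierTransform (ω : G → Matrix (Fin k) (Fin k) ℂ)
          (σ : G → Matrix (Fin dσ) (Fin dσ) ℂ)) ∧
    ((fourierTransform (ω : G → Matrix (Fin k) (Fin k) ℂ)
          (σ : G → Matrix (Fin dσ) (Fin dσ) ℂ)).trace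
      = (Fintype.card G : ℂ)⁻¹ *
          ∑ g : G, (starRingEnd ℂ) ((σ g).trace) * (ω g).trace) ∧
    ((fourierTransform (ω : G → Matrix (Fin k) (Fin k) ℂ)
          (σ : G → Matrix (Fin dσ) (Fin dσ) ℂ) = 0)
      ↔ ¬ ∃ T : Matrix (Fin k) (Fin dσ) ℂ, T ≠ 0 ∧ ∀ g : G, ω g * T = T * σ g) := by
  rw [fourierTransform_eq_groupAverage]
  refine ⟨isIdempotentElem_groupAverage _,
    isSelfAdjoint_groupAverage _ (star_conjKroneckerHom hσ hω), ?_, ?_⟩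
  · simp_rw [groupAverage, Matrix.trace_smul, Matrix.trace_sum, trace_conjKroneckerHom,
      smul_eq_mul]
  · simp_rw [groupAverage_eq_zero_iff, Matrix.vec_bijective.surjective.forall,
      conjKroneckerHom_mulVec_vec, Matrix.vec_inj,
      Matrix.mul_mul_conjTranspose_eq_iff_of_mem_unitary (hσ _), Matrix.vec_eq_zero_iff]
    simp only [not_exists, not_and', ne_eq, not_not]

open RB in
/-- The Fourier transform of a unitary representation at an irreducible unitary
representation is an orthogonal projection whose rank (trace) is the multiplicity;
it vanishes iff the irreducible does not occur as a subrepresentation. -/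
theorem fourierTransform_of_representation_isProjection
    {G : Type} [Group G] [Fintype G]
    (k dσ : ℕ)
    (ω : G →* Matrix (Fin k) (Fin k) ℂ)
    (hω : ∀ g : G, ω g ∈ Matrix.unitaryGroup (Fin k) ℂ)
    (σ : G →* Matrix (Fin dσ) (Fin dσ) ℂ)
    (hσ : ∀ g : G, σ g ∈ Matrix.unitaryGroup (Fin dσ) ℂ)
    (hirred : Irreducible σ) :
    (fourierTransform (ω : G → Matrix (Fin k) (Fin k) ℂ)
          (σ : G → Matrix (Fin dσ) (Fin dσ) ℂ) *
        fourierTransform (ω : G → Matrix (Fin k) (Fin k) ℂ)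
          (σ : G → Matrix (Fin dσ) (Fin dσ) ℂ)
      = fourierTransform (ω : G → Matrix (Fin k) (Fin k) ℂ)
          (σ : G → Matrix (Fin dσ) (Fin dσ) ℂ)) ∧
    ((fourierTransform (ω : G → Matrix (Fin k) (Fin k) ℂ)
          (σ : G → Matrix (Fin dσ) (Fin dσ) ℂ))ᴴ
      = fourierTransform (ω : G → Matrix (Fin k) (Fin k) ℂ)
          (σ : G → Matrix (Fin dσ) (Fin dσ) ℂ)) ∧
    ((fourierTransform (ω : G → Matrix (Fin k) (Fin k) ℂ)
          (σ : G → Matrix (Fin dσ) (Fin dσ) ℂ)).trace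
      = (Fintype.card G : ℂ)⁻¹ *
          ∑ g : G, (starRingEnd ℂ) ((σ g).trace) * (ω g).trace) ∧
    ((fourierTransform (ω : G → Matrix (Fin k) (Fin k) ℂ)
          (σ : G → Matrix (Fin dσ) (Fin dσ) ℂ) = 0)
      ↔ ¬ ∃ T : Matrix (Fin k) (Fin dσ) ℂ, T ≠ 0 ∧ ∀ g : G, ω g * T = T * σ g) :=
  fourierTransform_of_representation_isProjection_general k dσ ω hω σ hσ
end
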